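/- Soft Policy Iteration optimality: Let S, A be finite, r bounded, γ ∈ [0,1), α > 0, and let Π be the set of all full-support policies. Repeated application of soft policy evaluation and soft policy improvement starting from any π ∈ Π converges to a policy π* such that Q^{π*}(s,a) ≥ Q^{π}(s,a) for all π ∈ Π and all (s,a) ∈ S × A. -/

import Mathlib

/-!
Gibbs' inequality says that the Boltzmann policy of `x` maximizes the soft value
`π ↦ ∑ π (x - α log π)`, with maximum `α log ∑ exp (x / α)`. Comparing two soft Q-functions at the
point where their difference is largest, the soft Bellman equations turn this into
`Q ≤ Q'` whenever `Q'` belongs to the Boltzmann policy of `Q` (policy improvement) or of `Q'`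
itself. So the iterates increase; since every soft Q-function is bounded by
`(max r + γ α log |A|) / (1 - γ)`, they converge. By continuity the limit is the soft Q-function of
its own Boltzmann policy, hence dominates every soft Q-function.
-/

open Finset Filter Topology
open Real (log exp)

noncomputable section

def softValue {A : Type*} [Fintype A] (α : ℝ) (π x : A → ℝ) : ℝ :=
  ∑ a, π a * (x a - α * log (π a))

def boltzmann {A : Type*} [Fintype A] (α : ℝ) (x : A → ℝ) : A → ℝ :=
  fun a => exp (x a / α) / ∑ a', exp (x a' / α)

def IsSoftQ {S A : Type*} [Fintype S] [Fintype A] (r : S → A → ℝ) (p : S → A → S → ℝ)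
    (γ α : ℝ) (π Q : S → A → ℝ) : Prop :=
  ∀ s a, Q s a = r s a + γ * ∑ s', p s a s' * softValue α (π s') (Q s')

end

lemma sum_mul_le_of_le {ι : Type*} [Fintype ι] {w f : ι → ℝ} {M : ℝ} (hw0 : ∀ i, 0 ≤ w i)
    (hw1 : ∑ i, w i = 1) (hf : ∀ i, f i ≤ M) : ∑ i, w i * f i ≤ M :=
  calc ∑ i, w i * f i ≤ ∑ i, w i * M :=
        sum_le_sum fun i _ => mul_le_mul_of_nonneg_left (hf i) (hw0 i)
    _ = M := by rw [← sum_mul, hw1, one_mul]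

lemma le_div_one_sub_of_forall_le_add_mul {ι : Type*} [Finite ι] {D : ι → ℝ} {c γ : ℝ}
    (hγ : γ < 1) (h : ∀ M, (∀ j, D j ≤ M) → ∀ i, D i ≤ c + γ * M) (i : ι) :
    D i ≤ c / (1 - γ) := by
  have : Nonempty ι := ⟨i⟩
  obtain ⟨i₀, hi₀⟩ := Finite.exists_max D
  have := h (D i₀) hi₀ i₀
  rw [le_div_iff₀ (sub_pos.2 hγ)]
  nlinarith [hi₀ i]

lemma mul_log_sub_log_le_sub {x y : ℝ} (hx : 0 ≤ x) (hy : 0 < y) :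
    x * (log y - log x) ≤ y - x := by
  rcases hx.eq_or_lt with rfl | hx
  · simpa using hy.le
  calc x * (log y - log x) = x * log (y / x) := by rw [Real.log_div hy.ne' hx.ne']
    _ ≤ x * (y / x - 1) :=
        mul_le_mul_of_nonneg_left (Real.log_le_sub_one_of_pos (by positivity)) hx.le
    _ = y - x := by field_simp

section Boltzmann

variable {A : Type*} [Fintype A] {α : ℝ} {π x y : A → ℝ}

lemma softValue_sub_softValue : softValue α π x - softValue α π y = ∑ a, π a * (x a - y a) := by
  simp only [softValue, ← sum_sub_distrib]
  exact sum_congr rfl fun a _ => by ring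

@[fun_prop]
lemma Continuous.softValue {X : Type*} [TopologicalSpace X] {f g : X → A → ℝ} (hf : Continuous f)
    (hg : Continuous g) : Continuous fun x => softValue α (f x) (g x) := by
  have hlog (a : A) : Continuous fun x => f x a * Real.log (f x a) :=
    Real.continuous_mul_log.comp (by fun_prop)
  have h (x : X) : _root_.softValue α (f x) (g x) =
      ∑ a, (f x a * g x a - α * (f x a * Real.log (f x a))) :=
    sum_congr rfl fun a _ => by ring
  simp only [h]
  fun_prop

variable [Nonempty A]

lemma sum_exp_div_pos (α : ℝ) (x : A → ℝ) : 0 < ∑ a, exp (x a / α) :=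
  sum_pos (fun _ _ => Real.exp_pos _) univ_nonempty

lemma boltzmann_pos (α : ℝ) (x : A → ℝ) (a : A) : 0 < boltzmann α x a :=
  div_pos (Real.exp_pos _) (sum_exp_div_pos α x)

lemma sum_boltzmann (α : ℝ) (x : A → ℝ) : ∑ a, boltzmann α x a = 1 := by
  simp only [boltzmann, ← sum_div]
  exact div_self (sum_exp_div_pos α x).ne'

lemma log_boltzmann (α : ℝ) (x : A → ℝ) (a : A) :
    log (boltzmann α x a) = x a / α - log (∑ a', exp (x a' / α)) := by
  rw [boltzmann, Real.log_div (Real.exp_pos _).ne' (sum_exp_div_pos α x).ne', Real.log_exp]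

lemma softValue_boltzmann (hα : α ≠ 0) (x : A → ℝ) :
    softValue α (boltzmann α x) x = α * log (∑ a, exp (x a / α)) := by
  have h : ∀ a, boltzmann α x a * (x a - α * log (boltzmann α x a)) =
      boltzmann α x a * (α * log (∑ a', exp (x a' / α))) := fun a => by
    rw [log_boltzmann]; field_simp; ring
  rw [softValue, sum_congr rfl fun a _ => h a, ← sum_mul, sum_boltzmann, one_mul]

lemma softValue_le_mul_log_sum_exp (hα : 0 < α) (hπ0 : ∀ a, 0 ≤ π a) (hπ1 : ∑ a, π a = 1)
    (x : A → ℝ) : softValue α π x ≤ α * log (∑ a, exp (x a / α)) := by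
  have h : ∀ a, π a * (x a - α * log (π a)) ≤
      α * (boltzmann α x a - π a) + π a * (α * log (∑ a, exp (x a / α))) := fun a => by
    have hgibbs := mul_le_mul_of_nonneg_left
      (mul_log_sub_log_le_sub (hπ0 a) (boltzmann_pos α x a)) hα.le
    rw [log_boltzmann] at hgibbs
    have hsplit : π a * (x a - α * log (π a)) = α * (π a * (x a / α -
        log (∑ a', exp (x a' / α)) - log (π a))) + π a * (α * log (∑ a, exp (x a / α))) := by
      field_simp; ring
    linarith
  calc softValue α π x
      ≤ ∑ a, (α * (boltzmann α x a - π a) + π a * (α * log (∑ a, exp (x a / α)))) :=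
        sum_le_sum fun a _ => h a
    _ = α * log (∑ a, exp (x a / α)) := by
      rw [sum_add_distrib, ← mul_sum, sum_sub_distrib, sum_boltzmann, hπ1, ← sum_mul, hπ1]; ring

lemma softValue_le_softValue_boltzmann (hα : 0 < α) (hπ0 : ∀ a, 0 ≤ π a) (hπ1 : ∑ a, π a = 1)
    (x : A → ℝ) : softValue α π x ≤ softValue α (boltzmann α x) x :=
  (softValue_boltzmann hα.ne' x).symm ▸ softValue_le_mul_log_sum_exp hα hπ0 hπ1 x

lemma softValue_le_add_log_card (hα : 0 < α) (hπ0 : ∀ a, 0 ≤ π a) (hπ1 : ∑ a, π a = 1)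
    {M : ℝ} (hx : ∀ a, x a ≤ M) : softValue α π x ≤ M + α * log (Fintype.card A) := by
  have hsum : ∑ a, exp (x a / α) ≤ Fintype.card A * exp (M / α) := by
    calc ∑ a, exp (x a / α) ≤ ∑ _a : A, exp (M / α) :=
          sum_le_sum fun a _ => Real.exp_le_exp.2 (div_le_div_of_nonneg_right (hx a) hα.le)
      _ = Fintype.card A * exp (M / α) := by rw [sum_const, card_univ, nsmul_eq_mul]
  calc softValue α π x ≤ α * log (∑ a, exp (x a / α)) := softValue_le_mul_log_sum_exp hα hπ0 hπ1 x
    _ ≤ α * log (Fintype.card A * exp (M / α)) :=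
        mul_le_mul_of_nonneg_left (Real.log_le_log (sum_exp_div_pos α x) hsum) hα.le
    _ = M + α * log (Fintype.card A) := by
        rw [Real.log_mul (by simp) (Real.exp_pos _).ne', Real.log_exp]; field_simp; ring

lemma continuous_boltzmann (α : ℝ) : Continuous (boltzmann α : (A → ℝ) → A → ℝ) :=
  continuous_pi fun a => (by fun_prop : Continuous fun x : A → ℝ => exp (x a / α)).div
    (by fun_prop) fun x => (sum_exp_div_pos α x).ne'

end Boltzmann

section SoftMDP

variable {S A : Type*} [Fintype S] [Fintype A] {r : S → A → ℝ} {p : S → A → S → ℝ}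
  {γ α : ℝ} {π σ Q Q' : S → A → ℝ}

lemma isClosed_setOf_isSoftQ :
    IsClosed {πQ : (S → A → ℝ) × (S → A → ℝ) | IsSoftQ r p γ α πQ.1 πQ.2} := by
  simp only [IsSoftQ, Set.ofPred_forall]
  exact isClosed_iInter fun s => isClosed_iInter fun a => isClosed_eq (by fun_prop) (by fun_prop)

variable (hp0 : ∀ s a s', 0 ≤ p s a s') (hp1 : ∀ s a, ∑ s', p s a s' = 1) (hγ0 : 0 ≤ γ)
  (hγ1 : γ < 1)
include hp0 hp1 hγ0 hγ1

lemma IsSoftQ.le_of_softValue_sub_le (hQ : IsSoftQ r p γ α π Q) (hQ' : IsSoftQ r p γ α σ Q')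
    {w : S → A → ℝ} (hw0 : ∀ s a, 0 ≤ w s a) (hw1 : ∀ s, ∑ a, w s a = 1)
    (hV : ∀ s, softValue α (π s) (Q s) - softValue α (σ s) (Q' s) ≤ ∑ a, w s a * (Q s a - Q' s a)) :
    Q ≤ Q' := by
  intro s a
  have hdiff := le_div_one_sub_of_forall_le_add_mul
    (D := fun sa : S × A => Q sa.1 sa.2 - Q' sa.1 sa.2) (c := 0) hγ1 (fun M hM ⟨s, a⟩ => ?_) (s, a)
  · simpa [sub_nonpos] using hdiff
  calc Q s a - Q' s a
      = γ * ∑ s', p s a s' * (softValue α (π s') (Q s') - softValue α (σ s') (Q' s')) := by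
        rw [hQ s a, hQ' s a]; simp only [mul_sub, sum_sub_distrib]; ring
    _ ≤ 0 + γ * M := by
        rw [zero_add]
        refine mul_le_mul_of_nonneg_left (sum_mul_le_of_le (hp0 s a) (hp1 s a) fun s' => ?_) hγ0
        exact (hV s').trans (sum_mul_le_of_le (hw0 s') (hw1 s') fun a' => hM (s', a'))

variable [Nonempty A] (hα : 0 < α) (hπ0 : ∀ s a, 0 ≤ π s a) (hπ1 : ∀ s, ∑ a, π s a = 1)
include hα hπ0 hπ1

lemma IsSoftQ.le_of_eq_boltzmann (hQ : IsSoftQ r p γ α π Q)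
    (hσ : ∀ s, σ s = boltzmann α (Q s)) (hQ' : IsSoftQ r p γ α σ Q') : Q ≤ Q' := by
  refine hQ.le_of_softValue_sub_le hp0 hp1 hγ0 hγ1 hQ'
    (fun s a => (hσ s ▸ boltzmann_pos α (Q s) a).le) (fun s => hσ s ▸ sum_boltzmann α (Q s))
    fun s => ?_
  have hgreedy := hσ s ▸ softValue_le_softValue_boltzmann hα (hπ0 s) (hπ1 s) (Q s)
  have hsplit := softValue_sub_softValue (α := α) (π := σ s) (x := Q s) (y := Q' s)
  linarith

lemma IsSoftQ.le_of_eq_boltzmann_self (hQ : IsSoftQ r p γ α π Q)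
    (hσ : ∀ s, σ s = boltzmann α (Q' s)) (hQ' : IsSoftQ r p γ α σ Q') : Q ≤ Q' := by
  refine hQ.le_of_softValue_sub_le hp0 hp1 hγ0 hγ1 hQ' hπ0 hπ1 fun s => ?_
  have hgreedy := hσ s ▸ softValue_le_softValue_boltzmann hα (hπ0 s) (hπ1 s) (Q' s)
  have hsplit := softValue_sub_softValue (α := α) (π := π s) (x := Q s) (y := Q' s)
  linarith

lemma IsSoftQ.le_div_one_sub {R : ℝ} (hR : ∀ s a, r s a ≤ R) (hQ : IsSoftQ r p γ α π Q)
    (s : S) (a : A) :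
    Q s a ≤ (R + γ * (α * Real.log (Fintype.card A))) / (1 - γ) := by
  refine le_div_one_sub_of_forall_le_add_mul (D := fun sa : S × A => Q sa.1 sa.2) hγ1
    (fun M hM ⟨s, a⟩ => ?_) (s, a)
  have hV (s' : S) : softValue α (π s') (Q s') ≤ M + α * Real.log (Fintype.card A) :=
    softValue_le_add_log_card hα (hπ0 s') (hπ1 s') fun a' => hM (s', a')
  have := mul_le_mul_of_nonneg_left (sum_mul_le_of_le (hp0 s a) (hp1 s a) hV) hγ0
  have := hR s a
  rw [hQ s a]
  linarith

end SoftMDP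

theorem soft_policy_iteration_optimality_general
    {S A : Type*} [Fintype S] [Fintype A] [Nonempty A]
    (r : S → A → ℝ)
    (p : S → A → S → ℝ) (hp0 : ∀ s a s', 0 ≤ p s a s') (hp1 : ∀ s a, ∑ s', p s a s' = 1)
    (γ : ℝ) (hγ0 : 0 ≤ γ) (hγ1 : γ < 1)
    (α : ℝ) (hα : 0 < α)
    (πseq : ℕ → S → A → ℝ) (Qseq : ℕ → S → A → ℝ)
    (hpol : ∀ i, (∀ s a, 0 < πseq i s a) ∧ ∀ s, ∑ a, πseq i s a = 1)
    -- soft policy evaluation: Qseq i is the soft Q-function of πseq i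
    (heval : ∀ i s a, Qseq i s a = r s a + γ * ∑ s', p s a s' *
      (∑ a', πseq i s' a' * (Qseq i s' a' - α * Real.log (πseq i s' a'))))
    -- soft policy improvement with Π = all full-support policies: Boltzmann policy
    (himprove : ∀ i s a, πseq (i + 1) s a =
      Real.exp (Qseq i s a / α) / ∑ a', Real.exp (Qseq i s a' / α)) :
    ∃ (πstar : S → A → ℝ) (Qstar : S → A → ℝ),
      (∀ s a, 0 < πstar s a) ∧ (∀ s, ∑ a, πstar s a = 1) ∧
      (∀ s a, Qstar s a = r s a + γ * ∑ s', p s a s' *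
        (∑ a', πstar s' a' * (Qstar s' a' - α * Real.log (πstar s' a')))) ∧
      (∀ s a, Filter.Tendsto (fun i => Qseq i s a) Filter.atTop (nhds (Qstar s a))) ∧
      (∀ π' : S → A → ℝ, (∀ s a, 0 < π' s a) → (∀ s, ∑ a, π' s a = 1) →
        ∀ Q' : S → A → ℝ,
          (∀ s a, Q' s a = r s a + γ * ∑ s', p s a s' *
            (∑ a', π' s' a' * (Q' s' a' - α * Real.log (π' s' a')))) →
          ∀ s a, Q' s a ≤ Qstar s a) := by
  have hπseq (i : ℕ) : πseq (i + 1) = fun s => boltzmann α (Qseq i s) :=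
    funext fun s => funext (himprove i s)
  have hmono : Monotone Qseq := monotone_nat_of_le_succ fun i =>
    IsSoftQ.le_of_eq_boltzmann hp0 hp1 hγ0 hγ1 hα (fun s a => ((hpol i).1 s a).le) (hpol i).2
      (heval i) (congrFun (hπseq i)) (heval (i + 1))
  obtain ⟨R, hR⟩ := Finite.bddAbove_range fun sa : S × A => r sa.1 sa.2
  have hbdd : BddAbove (Set.range Qseq) := ⟨_, Set.forall_mem_range.2 fun i s a =>
    IsSoftQ.le_div_one_sub hp0 hp1 hγ0 hγ1 hα (fun s a => ((hpol i).1 s a).le) (hpol i).2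
      (fun s a => hR ⟨(s, a), rfl⟩) (heval i) s a⟩
  set Qstar := ⨆ i, Qseq i
  set πstar : S → A → ℝ := fun s => boltzmann α (Qstar s)
  have hQ : Tendsto Qseq atTop (𝓝 Qstar) := tendsto_atTop_ciSup hmono hbdd
  have hπ : Tendsto πseq atTop (𝓝 πstar) := by
    rw [← tendsto_add_atTop_iff_nat 1, funext hπseq]
    exact ((continuous_pi fun s => (continuous_boltzmann α).comp (continuous_apply s)).tendsto
      Qstar).comp hQ
  have hstar : IsSoftQ r p γ α πstar Qstar :=
    isClosed_setOf_isSoftQ.mem_of_tendsto (hπ.prodMk_nhds hQ) (Eventually.of_forall heval)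
  refine ⟨πstar, Qstar, fun s => boltzmann_pos α (Qstar s), fun s => sum_boltzmann α (Qstar s),
    hstar, fun s a => tendsto_pi_nhds.1 (tendsto_pi_nhds.1 hQ s) a, ?_⟩
  intro π' hπ'0 hπ'1 Q' hQ'
  exact IsSoftQ.le_of_eq_boltzmann_self hp0 hp1 hγ0 hγ1 hα (fun s a => (hπ'0 s a).le) hπ'1
    hQ' (fun _ => rfl) hstar

/-- Soft policy iteration (evaluation + Boltzmann improvement over the set of
all full-support policies) converges to a policy π* whose soft Q-function dominates that of
every full-support policy. -/
theorem soft_policy_iteration_optimality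
    {S A : Type*} [Fintype S] [Fintype A] [Nonempty S] [Nonempty A]
    (rmin rmax : ℝ) (r : S → A → ℝ) (hr : ∀ s a, r s a ∈ Set.Icc rmin rmax)
    (p : S → A → S → ℝ) (hp0 : ∀ s a s', 0 ≤ p s a s') (hp1 : ∀ s a, ∑ s', p s a s' = 1)
    (γ : ℝ) (hγ0 : 0 ≤ γ) (hγ1 : γ < 1)
    (α : ℝ) (hα : 0 < α)
    (π₀ : S → A → ℝ) (hπ₀0 : ∀ s a, 0 < π₀ s a) (hπ₀1 : ∀ s, ∑ a, π₀ s a = 1)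
    (πseq : ℕ → S → A → ℝ) (Qseq : ℕ → S → A → ℝ)
    (hstart : πseq 0 = π₀)
    (hpol : ∀ i, (∀ s a, 0 < πseq i s a) ∧ ∀ s, ∑ a, πseq i s a = 1)
    -- soft policy evaluation: Qseq i is the soft Q-function of πseq i
    (heval : ∀ i s a, Qseq i s a = r s a + γ * ∑ s', p s a s' *
      (∑ a', πseq i s' a' * (Qseq i s' a' - α * Real.log (πseq i s' a'))))
    -- soft policy improvement with Π = all full-support policies: Boltzmann policy
    (himprove : ∀ i s a, πseq (i + 1) s a =
      Real.exp (Qseq i s a / α) / ∑ a', Real.exp (Qseq i s a' / α)) :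
    ∃ (πstar : S → A → ℝ) (Qstar : S → A → ℝ),
      (∀ s a, 0 < πstar s a) ∧ (∀ s, ∑ a, πstar s a = 1) ∧
      (∀ s a, Qstar s a = r s a + γ * ∑ s', p s a s' *
        (∑ a', πstar s' a' * (Qstar s' a' - α * Real.log (πstar s' a')))) ∧
      (∀ s a, Filter.Tendsto (fun i => Qseq i s a) Filter.atTop (nhds (Qstar s a))) ∧
      (∀ π' : S → A → ℝ, (∀ s a, 0 < π' s a) → (∀ s, ∑ a, π' s a = 1) →
        ∀ Q' : S → A → ℝ,
          (∀ s a, Q' s a = r s a + γ * ∑ s', p s a s' *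
            (∑ a', π' s' a' * (Q' s' a' - α * Real.log (π' s' a')))) →
          ∀ s a, Q' s a ≤ Qstar s a) :=
  soft_policy_iteration_optimality_general r p hp0 hp1 γ hγ0 hγ1 α hα πseq Qseq hpol heval himprove
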